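/- The continued fraction K_{n=1}^∞ (−1/(2n))/1, i.e. with partial numerators b_n = −1/(2n) and partial denominators a_n = 1, converges to −√(π/(2e))·erfi(1/√2), corresponding to the case α = −2 of the sum-of-products continued fraction. -/

import Mathlib

/-!
The approximants of the continued fraction are `p N / q N`, where `p` and `q` solve the
three-term recurrence `y (n + 2) = y (n + 1) - y n / (2 (n + 2))`. Integrating by parts shows
that `ε n = (2ⁿ n!)⁻¹ ∫₀¹ (1 - t²)ⁿ exp ((t² - 1) / 2) dt` solves the same recurrence, with
`ε 0 = J` and `ε 1 = J - 1/2`, hence `ε n = p n + J q n`. Since `ε n ≤ (2ⁿ n!)⁻¹` decays much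
faster than `q n ≥ 1 / (n + 1)`, the approximants `p N / q N = ε N / q N - J` tend to `-J`, and
the substitution `t = √2 u` identifies `J` with `√(π / (2e)) erfi (1 / √2)`.
-/

open Real Filter

/-- Finite continued fraction approximant of depth `N`:
`cf b a N = b 1 / (a 1 + b 2 / (a 2 + ... + b N / a N))`. -/
noncomputable def cf (b a : ℕ → ℝ) (N : ℕ) : ℝ :=
  (List.range N).foldr (fun i acc => b (i + 1) / (a (i + 1) + acc)) 0

/-- The imaginary error function `erfi x = (2/√π) ∫_0^x exp (t²) dt`. -/
noncomputable def erfi (x : ℝ) : ℝ :=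
  (2 / Real.sqrt Real.pi) * ∫ t in (0:ℝ)..x, Real.exp (t ^ 2)

open MeasureTheory

section ContinuedFraction

variable (b a : ℕ → ℝ)

noncomputable def convNum : ℕ → ℝ
  | 0 => 0
  | 1 => b 1
  | n + 2 => a (n + 2) * convNum (n + 1) + b (n + 2) * convNum n

noncomputable def convDen : ℕ → ℝ
  | 0 => 1
  | 1 => a 1
  | n + 2 => a (n + 2) * convDen (n + 1) + b (n + 2) * convDen n

variable {b a}

theorem foldr_range_succ_eq_convNum_div_convDen {S : Set ℝ}
    (hS : ∀ n, ∀ x ∈ S, a (n + 2) + x ≠ 0 ∧ b (n + 2) / (a (n + 2) + x) ∈ S) (N : ℕ) :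
    ∀ x ∈ S, (List.range (N + 1)).foldr (fun i acc => b (i + 1) / (a (i + 1) + acc)) x =
      (convNum b a (N + 1) + x * convNum b a N) / (convDen b a (N + 1) + x * convDen b a N) := by
  induction N with
  | zero => simp [convNum, convDen]
  | succ N ih =>
    intro x hx
    obtain ⟨hax, hy⟩ := hS N x hx
    rw [List.range_succ, List.foldr_append, List.foldr_cons, List.foldr_nil, ih _ hy,
      ← mul_div_mul_right _ _ hax]
    simp only [convNum, convDen]
    congr 1 <;> field_simp <;> ring

theorem cf_eq_convNum_div_convDen {S : Set ℝ}
    (hS : ∀ n, ∀ x ∈ S, a (n + 2) + x ≠ 0 ∧ b (n + 2) / (a (n + 2) + x) ∈ S) (hS₀ : 0 ∈ S)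
    (N : ℕ) : cf b a N = convNum b a N / convDen b a N := by
  cases N with
  | zero => simp [cf, convNum, convDen]
  | succ N => simpa [cf] using foldr_range_succ_eq_convNum_div_convDen hS N 0 hS₀

end ContinuedFraction

noncomputable def weightedIntegral (n : ℕ) : ℝ :=
  ∫ t in (0 : ℝ)..1, (1 - t ^ 2) ^ n * exp ((t ^ 2 - 1) / 2)

theorem intervalIntegrable_one_sub_sq_pow_mul_exp (n : ℕ) (a b : ℝ) :
    IntervalIntegrable (fun t : ℝ => (1 - t ^ 2) ^ n * exp ((t ^ 2 - 1) / 2)) volume a b := by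
  apply Continuous.intervalIntegrable
  fun_prop

theorem hasDerivAt_mul_one_sub_sq_pow_mul_exp (m : ℕ) (t : ℝ) :
    HasDerivAt (fun t => t * (1 - t ^ 2) ^ m * exp ((t ^ 2 - 1) / 2))
      ((2 * m + 2) * ((1 - t ^ 2) ^ m * exp ((t ^ 2 - 1) / 2))
        - (1 - t ^ 2) ^ (m + 1) * exp ((t ^ 2 - 1) / 2)
        - 2 * m * ((1 - t ^ 2) ^ (m - 1) * exp ((t ^ 2 - 1) / 2))) t := by
  have hpow : HasDerivAt (fun t => (1 - t ^ 2) ^ m) (m * (1 - t ^ 2) ^ (m - 1) * -(2 * t)) t := by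
    simpa [Function.comp_def] using (hasDerivAt_pow m _).comp t ((hasDerivAt_pow 2 t).const_sub 1)
  have hexp : HasDerivAt (fun t => exp ((t ^ 2 - 1) / 2)) (exp ((t ^ 2 - 1) / 2) * t) t := by
    simpa using (((hasDerivAt_pow 2 t).sub_const 1).div_const 2).exp
  have hpow_succ : (m : ℝ) * ((1 - t ^ 2) ^ (m - 1) * (1 - t ^ 2)) = m * (1 - t ^ 2) ^ m := by
    rcases m with _ | m
    · simp
    · rw [Nat.add_sub_cancel, ← pow_succ]
  refine (((hasDerivAt_id' t).mul hpow).mul hexp).congr_deriv ?_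
  simp only [Pi.mul_apply]
  linear_combination 2 * exp ((t ^ 2 - 1) / 2) * hpow_succ

-- `m - 1` is truncated at `m = 0`, where its coefficient vanishes; `0 ^ m` is the boundary term
-- `[t (1 - t²)ᵐ exp ((t² - 1) / 2)]₀¹`.
theorem weightedIntegral_recurrence (m : ℕ) :
    (2 * m + 2) * weightedIntegral m - weightedIntegral (m + 1)
      - 2 * m * weightedIntegral (m - 1) = 0 ^ m := by
  have hint k := intervalIntegrable_one_sub_sq_pow_mul_exp k 0 1
  have := intervalIntegral.integral_eq_sub_of_hasDerivAt (a := 0) (b := 1)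
    (fun t _ => hasDerivAt_mul_one_sub_sq_pow_mul_exp m t) (by
      apply Continuous.intervalIntegrable; fun_prop)
  rw [intervalIntegral.integral_sub (((hint m).const_mul _).sub (hint _)) ((hint _).const_mul _),
    intervalIntegral.integral_sub ((hint m).const_mul _) (hint _),
    intervalIntegral.integral_const_mul, intervalIntegral.integral_const_mul] at this
  unfold weightedIntegral
  simpa using this

theorem weightedIntegral_one : weightedIntegral 1 = 2 * weightedIntegral 0 - 1 := by
  linear_combination (norm := norm_num) -weightedIntegral_recurrence 0

theorem weightedIntegral_add_two (n : ℕ) : weightedIntegral (n + 2) =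
    2 * (n + 2) * weightedIntegral (n + 1) - 2 * (n + 1) * weightedIntegral n := by
  linear_combination (norm := (push_cast; ring_nf)) -weightedIntegral_recurrence (n + 1)

theorem weightedIntegral_nonneg (n : ℕ) : 0 ≤ weightedIntegral n := by
  refine intervalIntegral.integral_nonneg zero_le_one fun t ht => ?_
  have : 0 ≤ 1 - t ^ 2 := by nlinarith [ht.1, ht.2]
  positivity

theorem weightedIntegral_le_one (n : ℕ) : weightedIntegral n ≤ 1 := by
  have := intervalIntegral.integral_mono_on zero_le_one
    (intervalIntegrable_one_sub_sq_pow_mul_exp n 0 1) intervalIntegrable_const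
    fun t ht => show (1 - t ^ 2) ^ n * exp ((t ^ 2 - 1) / 2) ≤ 1 by
      have h0 : 0 ≤ 1 - t ^ 2 := by nlinarith [ht.1, ht.2]
      have h1 : 1 - t ^ 2 ≤ 1 := by nlinarith
      exact mul_le_one₀ (pow_le_one₀ h0 h1) (exp_pos _).le (exp_le_one_iff.2 (by linarith))
  unfold weightedIntegral
  simpa using this

theorem weightedIntegral_zero :
    weightedIntegral 0 = √(π / (2 * exp 1)) * erfi (1 / √2) := by
  have hsub : ∫ t in (0 : ℝ)..1, exp (t ^ 2 / 2) = √2 * ∫ u in (0 : ℝ)..(1 / √2), exp (u ^ 2) := by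
    have h := intervalIntegral.integral_comp_div (a := 0) (b := 1) (fun u => exp (u ^ 2))
      (Real.sqrt_ne_zero'.2 two_pos)
    simp only [div_pow, Real.sq_sqrt zero_le_two, zero_div] at h
    exact h
  have hconst : √(π / (2 * exp 1)) * (2 / √π) = √2 / exp (1 / 2) := by
    rw [sqrt_div pi_pos.le, sqrt_mul zero_le_two, ← exp_half]
    have := mul_self_sqrt (zero_le_two (α := ℝ))
    have := sqrt_pos.2 pi_pos
    field_simp
    linarith
  rw [weightedIntegral, erfi, ← mul_assoc, hconst]
  simp only [pow_zero, one_mul, sub_div, exp_sub]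
  rw [intervalIntegral.integral_div, hsub]
  ring

local notation "p" => convNum (fun n : ℕ => -1 / (2 * (n : ℝ))) fun _ => 1
local notation "q" => convDen (fun n : ℕ => -1 / (2 * (n : ℝ))) fun _ => 1

theorem convDen_bounds (n : ℕ) : q n ≤ 2 * q (n + 1) ∧ 1 ≤ (n + 1) * q (n + 1) := by
  induction n with
  | zero => norm_num [convDen]
  | succ n ih =>
    have hrec : q (n + 2) = q (n + 1) - q n / (2 * (n + 2)) := by
      simp only [convDen]; push_cast; ring
    have hq : 0 < q (n + 1) := by nlinarith
    have hmono : (n + 1) * q (n + 1) ≤ (n + 2) * q (n + 2) := by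
      have : ((n : ℝ) + 2) * (q n / (2 * (n + 2))) = q n / 2 := by field_simp
      rw [hrec, mul_sub, this]
      linarith [ih.1]
    push_cast
    constructor <;> nlinarith

theorem one_le_succ_mul_convDen (n : ℕ) : 1 ≤ (n + 1) * q n := by
  rcases n with _ | n
  · simp [convDen]
  · have := (convDen_bounds n).2
    have : 0 ≤ q (n + 1) := by nlinarith
    push_cast
    nlinarith

theorem convDen_pos (n : ℕ) : 0 < q n :=
  pos_of_mul_pos_right (one_pos.trans_le (one_le_succ_mul_convDen n)) (by positivity)

theorem cf_eq_convNum_div_convDen_neg_one_div_two_mul (N : ℕ) :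
    cf (fun n => -1 / (2 * (n : ℝ))) (fun _ => 1) N = p N / q N := by
  refine cf_eq_convNum_div_convDen (S := Set.Ici (-1 / 2)) (fun n x hx => ?_) (by norm_num) N
  have hx : (1 : ℝ) / 2 ≤ 1 + x := by linarith [Set.mem_Ici.1 hx]
  refine ⟨by positivity, ?_⟩
  have : 1 / (2 * ((n + 2 : ℕ) : ℝ)) ≤ 1 / 4 :=
    one_div_le_one_div_of_le (by norm_num) (by push_cast; linarith)
  rw [Set.mem_Ici, le_div_iff₀ (by positivity), neg_div (2 * ((n + 2 : ℕ) : ℝ)) 1]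
  linarith

noncomputable def minimalSolution (n : ℕ) : ℝ := weightedIntegral n / (2 ^ n * n.factorial)

theorem minimalSolution_add_two (n : ℕ) :
    minimalSolution (n + 2) = minimalSolution (n + 1) - minimalSolution n / (2 * (n + 2)) := by
  simp only [minimalSolution, weightedIntegral_add_two, Nat.factorial_succ, pow_succ]
  push_cast
  field_simp
  ring

theorem minimalSolution_eq (n : ℕ) : minimalSolution n = p n + weightedIntegral 0 * q n := by
  induction n using Nat.twoStepInduction with
  | zero => simp [minimalSolution, convNum, convDen]
  | one =>
    simp only [minimalSolution, convNum, convDen, weightedIntegral_one, Nat.factorial_one,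
      Nat.cast_one, pow_one]
    ring
  | more n ih₀ ih₁ =>
    rw [minimalSolution_add_two, ih₀, ih₁]
    simp only [convNum, convDen]
    push_cast
    ring

theorem minimalSolution_nonneg (n : ℕ) : 0 ≤ minimalSolution n :=
  div_nonneg (weightedIntegral_nonneg n) (by positivity)

theorem minimalSolution_le (n : ℕ) : minimalSolution n ≤ 1 / (2 ^ n * n.factorial) :=
  div_le_div_of_nonneg_right (weightedIntegral_le_one n) (by positivity)

theorem tendsto_minimalSolution_div_convDen :
    Tendsto (fun N => minimalSolution N / q N) atTop (nhds 0) := by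
  refine squeeze_zero (g := fun N => 1 / N.factorial)
    (fun N => div_nonneg (minimalSolution_nonneg N) (convDen_pos N).le) (fun N => ?_)
    (by simpa using FloorSemiring.tendsto_pow_div_factorial_atTop (1 : ℝ))
  have h2pow : (N + 1 : ℝ) ≤ 2 ^ N := by exact_mod_cast Nat.lt_two_pow_self
  calc minimalSolution N / q N ≤ (N + 1) * minimalSolution N := by
        rw [div_le_iff₀ (convDen_pos N)]
        nlinarith [one_le_succ_mul_convDen N, minimalSolution_nonneg N]
    _ ≤ (N + 1) / 2 ^ N * (1 / N.factorial) := by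
        rw [div_mul_div_comm, mul_one, ← mul_one_div]
        gcongr
        exact minimalSolution_le N
    _ ≤ 1 / N.factorial :=
        mul_le_of_le_one_left (by positivity) ((div_le_one (by positivity)).2 h2pow)

theorem cf_neg_one_over_two_n :
    Tendsto (cf (fun n => -1 / (2 * (n : ℝ))) (fun _ => 1)) atTop
      (nhds (-(Real.sqrt (Real.pi / (2 * Real.exp 1)) * erfi (1 / Real.sqrt 2)))) := by
  rw [← weightedIntegral_zero]
  have h := tendsto_minimalSolution_div_convDen.sub_const (weightedIntegral 0)
  rw [zero_sub] at h
  refine h.congr fun N => ?_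
  rw [cf_eq_convNum_div_convDen_neg_one_div_two_mul, minimalSolution_eq, add_div,
    mul_div_cancel_right₀ _ (convDen_pos N).ne', add_sub_cancel_right]
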